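/- arXiv:2512.12582 — 4 statements merged into one kernel-verified Lean document; each statement's English description precedes it below -/
import Mathlib

section
/- (Proposition 4: diversity and revelation.) Assume d_A ≠ 0, d_B ≠ 0, and |d_A| ≥ |d_B|. Then every Nash equilibrium (α_A*, α_B*) of the digital representative game satisfies α_A* ≥ α_B*: the member whose preference is more diverse reveals at least as much information at equilibrium. -/
open Set Filter

/-- Team decision formed by the two digital representatives. -/
noncomputable def teamDec (lam : ℝ → ℝ) (thA thB mu : ℝ) (aA aB : ℝ) : ℝ :=
  (lam aA * thA + (1 - lam aA) * mu + lam aB * thB + (1 - lam aB) * mu) / 2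

/-- Alice's total loss: preference loss plus communication cost. -/
noncomputable def lossA (lam c : ℝ → ℝ) (thA thB mu : ℝ) (aA aB : ℝ) : ℝ :=
  (thA - teamDec lam thA thB mu aA aB) ^ 2 + c aA

/-- Bob's total loss: preference loss plus communication cost. -/
noncomputable def lossB (lam c : ℝ → ℝ) (thA thB mu : ℝ) (aA aB : ℝ) : ℝ :=
  (thB - teamDec lam thA thB mu aA aB) ^ 2 + c aB

/-- The function `f_m(α) = λ(α) + (2/d_m²)·c'(α)/λ'(α)`. -/
noncomputable def fFun (lam lam' c' : ℝ → ℝ) (d : ℝ) (α : ℝ) : ℝ :=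
  lam α + (2 / d ^ 2) * (c' α / lam' α)

/-- The function `h_m(α) = 2 − λ(α)·d_{−m}/d_m`. -/
noncomputable def hFun (lam : ℝ → ℝ) (dm dOther : ℝ) (α : ℝ) : ℝ :=
  2 - lam α * dOther / dm

/-- `a` is a best response of Alice to Bob's revelation `aB`:
it minimizes `α ↦ L_A(α, aB)` over `[0,1)`. -/
def IsBestRespA (lam c : ℝ → ℝ) (thA thB mu : ℝ) (a aB : ℝ) : Prop :=
  a ∈ Set.Ico (0:ℝ) 1 ∧
    ∀ x ∈ Set.Ico (0:ℝ) 1, lossA lam c thA thB mu a aB ≤ lossA lam c thA thB mu x aB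

/-- Nash equilibrium of the digital representative game. -/
def IsNashEq (lam c : ℝ → ℝ) (thA thB mu : ℝ) (aA aB : ℝ) : Prop :=
  aA ∈ Set.Ico (0:ℝ) 1 ∧ aB ∈ Set.Ico (0:ℝ) 1 ∧
  (∀ α ∈ Set.Ico (0:ℝ) 1, lossA lam c thA thB mu aA aB ≤ lossA lam c thA thB mu α aB) ∧
  (∀ α ∈ Set.Ico (0:ℝ) 1, lossB lam c thA thB mu aA aB ≤ lossB lam c thA thB mu aA α)

/-!
Suppose `α_A < α_B` at an equilibrium, so `λ(α_A) < λ(α_B)`. If `d_A` and `d_B` have opposite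
signs, let both members deviate to each other's revelation: the costs cancel in the sum of the
two deviation gains, which is nevertheless positive. If they have the same sign, the first-order
conditions `λ'(α_A) d_A (θ_A - θ_T) ≤ c'(α_A)` and `c'(α_B) ≤ λ'(α_B) d_B (θ_B - θ_T)` together
with `|d_B| ≤ |d_A|` and the concavity of `λ` force `c'(α_B) ≤ c'(α_A)`, contradicting the strict
monotonicity of `c'`.
-/

theorem IsMinOn.nonneg_sub_mul_of_hasDerivAt {f : ℝ → ℝ} {s : Set ℝ} {a b f' : ℝ}
    (hs : Convex ℝ s) (h : IsMinOn f s a) (ha : a ∈ s) (hb : b ∈ s) (hf : HasDerivAt f f' a) :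
    0 ≤ (b - a) * f' := by
  simpa using h.localize.hasFDerivWithinAt_nonneg hf.hasFDerivAt.hasFDerivWithinAt
    (sub_mem_posTangentConeAt_of_segment_subset (hs.segment_subset ha hb))

theorem strictMonoOn_of_hasDerivAt_pos {D : Set ℝ} (hD : Convex ℝ D) {f f' : ℝ → ℝ}
    (hf : ∀ x ∈ D, HasDerivAt f (f' x) x) (hf' : ∀ x ∈ D, 0 < f' x) : StrictMonoOn f D :=
  strictMonoOn_of_hasDerivWithinAt_pos hD (fun x hx => (hf x hx).continuousAt.continuousWithinAt)
    (fun x hx => (hf x (interior_subset hx)).hasDerivWithinAt)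
    (fun x hx => hf' x (interior_subset hx))

lemma le_of_first_order_conditions {p q u v LA LB cA cB : ℝ} (hp : 0 ≤ p) (hq : 0 ≤ q)
    (hLB : 0 < LB) (hLBA : LB ≤ LA) (hcA : 0 ≤ cA) (huv : 0 ≤ u * v) (hvu : v ^ 2 ≤ u ^ 2)
    (hA : LA * (u * ((2 - p) * u - q * v)) ≤ 2 * cA)
    (hB : 2 * cB ≤ LB * (v * ((2 - q) * v - p * u))) : cB ≤ cA := by
  rcases eq_or_ne u 0 with rfl | hu
  · obtain rfl : v = 0 := by nlinarith
    linarith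
  by_contra! hlt
  have hLA : 0 < LA := hLB.trans_le hLBA
  have hv_uv : v ^ 2 ≤ u * v := by nlinarith
  have huv_u : u * v ≤ u ^ 2 := by nlinarith
  have hcross : 0 ≤ u * ((2 - p) * u - q * v) * v ^ 2 - v * ((2 - q) * v - p * u) * u ^ 2 := by
    have h₁ := sub_nonneg.2 hv_uv
    have h₂ := sub_nonneg.2 huv_u
    calc (0 : ℝ) ≤ p * u ^ 2 * (u * v - v ^ 2) + q * v ^ 2 * (u ^ 2 - u * v) := by positivity
      _ = _ := by ring
  have hscaled : LA * LB * (u * ((2 - p) * u - q * v) * v ^ 2)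
      < LA * LB * (v * ((2 - q) * v - p * u) * u ^ 2) :=
    calc LA * LB * (u * ((2 - p) * u - q * v) * v ^ 2)
        = LA * (u * ((2 - p) * u - q * v)) * (LB * v ^ 2) := by ring
      _ ≤ 2 * cA * (LB * v ^ 2) := by gcongr
      _ ≤ 2 * cA * (LA * u ^ 2) := by gcongr
      _ < 2 * cB * (LA * u ^ 2) := by gcongr
      _ ≤ LB * (v * ((2 - q) * v - p * u)) * (LA * u ^ 2) := by gcongr
      _ = LA * LB * (v * ((2 - q) * v - p * u) * u ^ 2) := by ring
  nlinarith [mul_nonneg (mul_pos hLA hLB).le hcross]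

section Game

variable (lam c : ℝ → ℝ) (thA thB mu : ℝ)

lemma thA_sub_teamDec (aA aB : ℝ) : thA - teamDec lam thA thB mu aA aB
    = ((2 - lam aA) * (thA - mu) - lam aB * (thB - mu)) / 2 := by
  unfold teamDec; ring

lemma thB_sub_teamDec (aA aB : ℝ) : thB - teamDec lam thA thB mu aA aB
    = ((2 - lam aB) * (thB - mu) - lam aA * (thA - mu)) / 2 := by
  unfold teamDec; ring

variable {lam c} in
lemma hasDerivAt_lossA_left {l k aB x : ℝ} (hl : HasDerivAt lam l x) (hc : HasDerivAt c k x) :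
    HasDerivAt (fun α => lossA lam c thA thB mu α aB)
      (k - l * ((thA - mu) * ((2 - lam x) * (thA - mu) - lam aB * (thB - mu))) / 2) x := by
  simp only [lossA, thA_sub_teamDec]
  refine (((((hl.const_sub 2).mul_const (thA - mu)).sub_const (lam aB * (thB - mu))).div_const 2
    |>.fun_pow 2).add hc).congr_deriv ?_
  ring

variable {lam c} in
lemma hasDerivAt_lossB_right {l k aA x : ℝ} (hl : HasDerivAt lam l x) (hc : HasDerivAt c k x) :
    HasDerivAt (fun α => lossB lam c thA thB mu aA α)
      (k - l * ((thB - mu) * ((2 - lam x) * (thB - mu) - lam aA * (thA - mu))) / 2) x := by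
  simp only [lossB, thB_sub_teamDec]
  refine (((((hl.const_sub 2).mul_const (thB - mu)).sub_const (lam aA * (thA - mu))).div_const 2
    |>.fun_pow 2).add hc).congr_deriv ?_
  ring

lemma lossA_sub_lossA_add_lossB_sub_lossB (aA aB : ℝ) :
    (lossA lam c thA thB mu aA aB - lossA lam c thA thB mu aB aB)
      + (lossB lam c thA thB mu aA aB - lossB lam c thA thB mu aA aA)
    = (lam aB - lam aA) * ((4 - lam aA - lam aB) * ((thA - mu) ^ 2 - (thB - mu) ^ 2)
        - 2 * (lam aB - lam aA) * ((thA - mu) * (thB - mu))) / 4 := by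
  simp only [lossA, lossB, thA_sub_teamDec, thB_sub_teamDec]
  ring

end Game

theorem more_diverse_member_reveals_more_general
    (lam lam' c c' : ℝ → ℝ)
    (hlamDeriv : ∀ α ∈ Set.Icc (0:ℝ) 1, HasDerivAt lam (lam' α) α)
    (hlam0 : lam 0 = 0) (hlam1 : lam 1 = 1)
    (hlam'pos : ∀ α ∈ Set.Icc (0:ℝ) 1, 0 < lam' α)
    (hlam'anti : ∀ x ∈ Set.Icc (0:ℝ) 1, ∀ y ∈ Set.Icc (0:ℝ) 1, x ≤ y → lam' y ≤ lam' x)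
    (hcDeriv : ∀ α ∈ Set.Ico (0:ℝ) 1, HasDerivAt c (c' α) α)
    (hc'nonneg : ∀ α ∈ Set.Ico (0:ℝ) 1, 0 ≤ c' α)
    (hc'strictMono : ∀ x ∈ Set.Ico (0:ℝ) 1, ∀ y ∈ Set.Ico (0:ℝ) 1, x < y → c' x < c' y)
    (thA thB muG dA dB : ℝ)
    (hdA : dA = thA - muG) (hdB : dB = thB - muG)
    (hdiv : |dA| ≥ |dB|) :
    ∀ aA aB : ℝ, IsNashEq lam c thA thB muG aA aB → aB ≤ aA := by
  subst hdA hdB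
  rintro aA aB ⟨hA, hB, hminA, hminB⟩
  by_contra! hlt
  have hAI : aA ∈ Icc (0:ℝ) 1 := Ico_subset_Icc_self hA
  have hBI : aB ∈ Icc (0:ℝ) 1 := Ico_subset_Icc_self hB
  have hmono := strictMonoOn_of_hasDerivAt_pos (convex_Icc 0 1) hlamDeriv hlam'pos
  have hp : 0 ≤ lam aA := hlam0 ▸ hmono.monotoneOn (left_mem_Icc.2 zero_le_one) hAI hA.1
  have hpq : lam aA < lam aB := hmono hAI hBI hlt
  have hq : lam aB ≤ 1 := hlam1 ▸ hmono.monotoneOn hBI (right_mem_Icc.2 zero_le_one) hB.2.le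
  have hd : (thB - muG) ^ 2 ≤ (thA - muG) ^ 2 := sq_le_sq.2 hdiv
  rcases lt_or_ge ((thA - muG) * (thB - muG)) 0 with hopp | hsame
  · have hswap := lossA_sub_lossA_add_lossB_sub_lossB lam c thA thB muG aA aB
    have hspread : 0 ≤ (4 - lam aA - lam aB) * ((thA - muG) ^ 2 - (thB - muG) ^ 2) :=
      mul_nonneg (by linarith) (sub_nonneg.2 hd)
    nlinarith [hminA aB hB, hminB aA hA, mul_pos (sub_pos.2 hpq) (sub_pos.2 hpq)]
  · have focA := nonneg_of_mul_nonneg_right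
      ((isMinOn_iff.2 hminA).nonneg_sub_mul_of_hasDerivAt (convex_Ico 0 1) hA hB
        (hasDerivAt_lossA_left thA thB muG (hlamDeriv aA hAI) (hcDeriv aA hA))) (sub_pos.2 hlt)
    have focB := nonpos_of_mul_nonneg_right
      ((isMinOn_iff.2 hminB).nonneg_sub_mul_of_hasDerivAt (convex_Ico 0 1) hB hA
        (hasDerivAt_lossB_right thA thB muG (hlamDeriv aB hBI) (hcDeriv aB hB))) (sub_neg.2 hlt)
    refine (hc'strictMono aA hA aB hB hlt).not_ge
      (le_of_first_order_conditions hp (hp.trans hpq.le) (hlam'pos aB hBI)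
        (hlam'anti aA hAI aB hBI hlt.le) (hc'nonneg aA hA) hsame hd ?_ ?_) <;> linarith

/-- Proposition 4: diversity and revelation. If `|d_A| ≥ |d_B|`, every Nash
equilibrium `(α_A*, α_B*)` satisfies `α_A* ≥ α_B*`. -/
theorem more_diverse_member_reveals_more
    (lam lam' c c' : ℝ → ℝ)
    (hlamDeriv : ∀ α ∈ Set.Icc (0:ℝ) 1, HasDerivAt lam (lam' α) α)
    (hlam'Cont : ContinuousOn lam' (Set.Icc (0:ℝ) 1))
    (hlam0 : lam 0 = 0) (hlam1 : lam 1 = 1)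
    (hlam'pos : ∀ α ∈ Set.Icc (0:ℝ) 1, 0 < lam' α)
    (hlam'anti : ∀ x ∈ Set.Icc (0:ℝ) 1, ∀ y ∈ Set.Icc (0:ℝ) 1, x ≤ y → lam' y ≤ lam' x)
    (hcDeriv : ∀ α ∈ Set.Ico (0:ℝ) 1, HasDerivAt c (c' α) α)
    (hc'Cont : ContinuousOn c' (Set.Ico (0:ℝ) 1))
    (hc0 : c 0 = 0)
    (hc'nonneg : ∀ α ∈ Set.Ico (0:ℝ) 1, 0 ≤ c' α)
    (hc'strictMono : ∀ x ∈ Set.Ico (0:ℝ) 1, ∀ y ∈ Set.Ico (0:ℝ) 1, x < y → c' x < c' y)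
    (hc'top : Filter.Tendsto c' (nhdsWithin 1 (Set.Iio 1)) Filter.atTop)
    (thA thB muG dA dB : ℝ)
    (hdA : dA = thA - muG) (hdB : dB = thB - muG)
    (hdAne : dA ≠ 0) (hdBne : dB ≠ 0) (hdiv : |dA| ≥ |dB|) :
    ∀ aA aB : ℝ, IsNashEq lam c thA thB muG aA aB → aB ≤ aA :=
  more_diverse_member_reveals_more_general lam lam' c c' hlamDeriv hlam0 hlam1 hlam'pos hlam'anti
    hcDeriv hc'nonneg hc'strictMono thA thB muG dA dB hdA hdB hdiv
end

section
/- (Theorem 2, part 2: team preference loss dominance.) For every revelation profile (α_A, α_B) ∈ [0,1)², the team preference loss satisfies the identity e_A(α_A, α_B) + e_B(α_A, α_B) = (θ_B − θ_A)²/2 + ½[(1 − λ(α_A))·d_A + (1 − λ(α_B))·d_B]². Consequently e_T = e_A + e_B ≥ e_T^B = (θ_B − θ_A)²/2, with equality if and only if (1 − λ(α_A))·d_A + (1 − λ(α_B))·d_B = 0. -/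
open Set Filter

/-- Theorem 2, part 2: team preference loss dominance. For every profile,
`e_A + e_B = (θ_B−θ_A)²/2 + ½[(1−λ(α_A))d_A + (1−λ(α_B))d_B]²`; hence `e_T ≥ e_T^B`, with
equality iff `(1−λ(α_A))d_A + (1−λ(α_B))d_B = 0`. -/
theorem team_preference_loss_dominance
    (lam : ℝ → ℝ) (hlam0 : lam 0 = 0) (hlam1 : lam 1 = 1)
    (thA thB muG dA dB : ℝ)
    (hdA : dA = thA - muG) (hdB : dB = thB - muG)
    :
    ∀ aA ∈ Set.Ico (0:ℝ) 1, ∀ aB ∈ Set.Ico (0:ℝ) 1,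
      ((thA - teamDec lam thA thB muG aA aB) ^ 2 + (thB - teamDec lam thA thB muG aA aB) ^ 2 =
        (thB - thA) ^ 2 / 2 + ((1 - lam aA) * dA + (1 - lam aB) * dB) ^ 2 / 2) ∧
      ((thB - thA) ^ 2 / 2 ≤
        (thA - teamDec lam thA thB muG aA aB) ^ 2 + (thB - teamDec lam thA thB muG aA aB) ^ 2) ∧
      ((thA - teamDec lam thA thB muG aA aB) ^ 2 + (thB - teamDec lam thA thB muG aA aB) ^ 2 =
          (thB - thA) ^ 2 / 2 ↔
        (1 - lam aA) * dA + (1 - lam aB) * dB = 0) := by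
  intro aA _ aB _
  have key : (thA - teamDec lam thA thB muG aA aB) ^ 2 + (thB - teamDec lam thA thB muG aA aB) ^ 2 =
      (thB - thA) ^ 2 / 2 + ((1 - lam aA) * dA + (1 - lam aB) * dB) ^ 2 / 2 := by
    subst hdA hdB; unfold teamDec; ring
  refine ⟨key, ?_, ?_⟩
  · nlinarith [sq_nonneg ((1 - lam aA) * dA + (1 - lam aB) * dB)]
  · rw [key]
    constructor
    · intro h; nlinarith [sq_nonneg ((1 - lam aA) * dA + (1 - lam aB) * dB)]
    · intro h; rw [h]; ring
end

section
/- (Equality cases of Theorem 2, part 2.) Let e_T(α_A, α_B) = e_A + e_B and e_T^B = (θ_B − θ_A)²/2. Then: (i) at the no-revelation profile (0,0), e_T(0,0) = e_T^B if and only if d_A + d_B = 0 (equivalently, κ = d_A/d_B = −1); (ii) at a one-member-revealing profile (α_A, 0) with d_B ≠ 0, e_T(α_A, 0) = e_T^B if and only if (1 − λ(α_A))·d_A = −d_B (equivalently, κ = −1/(1 − λ(α_A))); (iii) if preferences are aligned, i.e., d_A·d_B > 0, then e_T(α_A, α_B) > e_T^B strictly for every profile (α_A, α_B) ∈ [0,1)².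 -/
open Set Filter

/-- Equality cases of Theorem 2, part 2. With `e_T = e_A + e_B` and
`e_T^B = (θ_B−θ_A)²/2`: (i) `e_T(0,0) = e_T^B ↔ d_A + d_B = 0`; (ii) for a one-member-revealing
profile `(α_A, 0)` with `d_B ≠ 0`, `e_T(α_A,0) = e_T^B ↔ (1−λ(α_A))d_A = −d_B`; (iii) if
`d_A·d_B > 0`, then `e_T > e_T^B` strictly on all of `[0,1)²`. -/
theorem team_preference_loss_equality_cases
    (lam : ℝ → ℝ) (hmono : StrictMonoOn lam (Set.Icc (0:ℝ) 1))
    (hlam0 : lam 0 = 0) (hlam1 : lam 1 = 1)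
    (thA thB muG dA dB : ℝ)
    (hdA : dA = thA - muG) (hdB : dB = thB - muG)
    :
    -- (i)
    (((thA - teamDec lam thA thB muG 0 0) ^ 2 + (thB - teamDec lam thA thB muG 0 0) ^ 2 =
        (thB - thA) ^ 2 / 2) ↔ dA + dB = 0) ∧
    -- (ii)
    (dB ≠ 0 → ∀ aA ∈ Set.Ico (0:ℝ) 1,
      (((thA - teamDec lam thA thB muG aA 0) ^ 2 + (thB - teamDec lam thA thB muG aA 0) ^ 2 =
          (thB - thA) ^ 2 / 2) ↔ (1 - lam aA) * dA = -dB)) ∧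
    -- (iii)
    (dA * dB > 0 → ∀ aA ∈ Set.Ico (0:ℝ) 1, ∀ aB ∈ Set.Ico (0:ℝ) 1,
      (thB - thA) ^ 2 / 2 <
        (thA - teamDec lam thA thB muG aA aB) ^ 2 + (thB - teamDec lam thA thB muG aA aB) ^ 2) := by
  have key : ∀ aA aB : ℝ,
      (thA - teamDec lam thA thB muG aA aB) ^ 2 + (thB - teamDec lam thA thB muG aA aB) ^ 2
        - (thB - thA) ^ 2 / 2
      = ((1 - lam aA) * dA + (1 - lam aB) * dB) ^ 2 / 2 := by
    intro aA aB
    have hA : thA = muG + dA := by linarith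
    have hB : thB = muG + dB := by linarith
    subst hA hB
    unfold teamDec
    ring
  have hlt1 : ∀ a ∈ Set.Ico (0:ℝ) 1, lam a < 1 ∧ 0 ≤ lam a := by
    intro a ha
    obtain ⟨h0, h1⟩ := ha
    constructor
    · calc lam a < lam 1 := hmono ⟨h0, le_of_lt h1⟩ ⟨by norm_num, le_refl 1⟩ h1
        _ = 1 := hlam1
    · rcases eq_or_lt_of_le h0 with h | h
      · rw [← h, hlam0]
      · have := hmono ⟨le_refl 0, by norm_num⟩ ⟨h0, le_of_lt h1⟩ h
        rw [hlam0] at this; linarith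
  refine ⟨?_, ?_, ?_⟩
  · have h := key 0 0
    rw [hlam0] at h
    constructor
    · intro he
      have : ((1 - 0) * dA + (1 - 0) * dB) ^ 2 / 2 = 0 := by linarith
      have h2 : (dA + dB) ^ 2 = 0 := by nlinarith
      have := pow_eq_zero_iff (n := 2) (by norm_num) |>.mp h2
      linarith
    · intro he
      nlinarith
  · intro _ aA haA
    have h := key aA 0
    rw [hlam0] at h
    constructor
    · intro he
      have h2 : ((1 - lam aA) * dA + dB) ^ 2 = 0 := by nlinarith
      have := pow_eq_zero_iff (n := 2) (by norm_num) |>.mp h2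
      linarith
    · intro he
      nlinarith
  · intro hpos aA haA aB haB
    have h := key aA aB
    obtain ⟨h1A, h0A⟩ := hlt1 aA haA
    obtain ⟨h1B, h0B⟩ := hlt1 aB haB
    have hw : (1 - lam aA) * dA + (1 - lam aB) * dB ≠ 0 := by
      rcases (mul_pos_iff.mp hpos) with ⟨hA', hB'⟩ | ⟨hA', hB'⟩
      · have : 0 < (1 - lam aA) * dA := mul_pos (by linarith) hA'
        have : 0 < (1 - lam aB) * dB := mul_pos (by linarith) hB'
        intro hc; linarith
      · have : (1 - lam aA) * dA < 0 := mul_neg_of_pos_of_neg (by linarith) hA'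
        have : (1 - lam aB) * dB < 0 := mul_neg_of_pos_of_neg (by linarith) hB'
        intro hc; linarith
    have : 0 < ((1 - lam aA) * dA + (1 - lam aB) * dB) ^ 2 / 2 := by positivity
    linarith
end

section
/- (Competitive versus free-riding best responses.) Assume d_A ≠ 0 and d_B ≠ 0, and for α_B ∈ [0,1) let α_A*(α_B) denote the unique minimizer of L_A(·, α_B) on [0,1). If preferences conflict (d_A·d_B < 0), then α_A*(·) is nondecreasing on [0,1), and strictly increasing on any interval where α_A*(α_B) > 0. If preferences are aligned (d_A·d_B > 0), then α_A*(·) is nonincreasing on [0,1), and strictly decreasing on any interval where α_A*(α_B) > 0. -/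
open Set Filter

/-- Derivative of Alice's loss with respect to her own revelation level. -/
lemma hasDerivAt_lossA (lam lam' c c' : ℝ → ℝ) (thA thB muG : ℝ)
    (hlamDeriv : ∀ α ∈ Set.Icc (0:ℝ) 1, HasDerivAt lam (lam' α) α)
    (hcDeriv : ∀ α ∈ Set.Ico (0:ℝ) 1, HasDerivAt c (c' α) α)
    {a : ℝ} (ha : a ∈ Set.Ico (0:ℝ) 1) (b : ℝ) :
    HasDerivAt (fun α => lossA lam c thA thB muG α b)
      (c' a - lam' a * (thA - muG) * (thA - teamDec lam thA thB muG a b)) a := by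
  have hl := hlamDeriv a (Set.Ico_subset_Icc_self ha)
  have hc := hcDeriv a ha
  have hT : HasDerivAt (fun α => teamDec lam thA thB muG α b)
      (lam' a * (thA - muG) / 2) a := by
    have h1 : HasDerivAt
        (fun α => lam α * thA + (1 - lam α) * muG + lam b * thB + (1 - lam b) * muG)
        ((lam' a * thA + (0 - lam' a) * muG + 0) + 0) a :=
      (((hl.mul_const thA).add
        (((hasDerivAt_const a (1:ℝ)).sub hl).mul_const muG)).add
        (hasDerivAt_const a (lam b * thB))).add (hasDerivAt_const a ((1 - lam b) * muG))
    have h2 := h1.div_const 2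
    have : ((lam' a * thA + (0 - lam' a) * muG + 0) + 0) / 2 = lam' a * (thA - muG) / 2 := by
      ring
    rw [this] at h2
    exact h2
  have h2 : HasDerivAt (fun α => (thA - teamDec lam thA thB muG α b) ^ 2)
      ((2:ℕ) * (thA - teamDec lam thA thB muG a b) ^ (2 - 1)
        * (0 - lam' a * (thA - muG) / 2)) a :=
    ((hasDerivAt_const a thA).sub hT).pow 2
  have h3 := h2.add hc
  have heq : (2:ℕ) * (thA - teamDec lam thA thB muG a b) ^ (2 - 1)
        * (0 - lam' a * (thA - muG) / 2) + c' a
      = c' a - lam' a * (thA - muG) * (thA - teamDec lam thA thB muG a b) := by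
    push_cast
    ring
  rw [heq] at h3
  exact h3

/-- If a function has a negative derivative at a point of `[0,1)`, that point is not
a minimizer over `[0,1)`. -/
lemma not_isMin_of_deriv_neg {f : ℝ → ℝ} {f' a : ℝ} (hd : HasDerivAt f f' a)
    (ha : a ∈ Set.Ico (0:ℝ) 1) (hneg : f' < 0)
    (hmin : ∀ x ∈ Set.Ico (0:ℝ) 1, f a ≤ f x) : False := by
  have hs := hasDerivAt_iff_tendsto_slope.1 hd
  have hev : ∀ᶠ y in nhdsWithin a {a}ᶜ, slope f a y < 0 :=
    hs.eventually_lt_const hneg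
  have hle : nhdsWithin a (Set.Ioi a) ≤ nhdsWithin a {a}ᶜ :=
    nhdsWithin_mono a (fun y hy => ne_of_gt hy)
  have hev2 : ∀ᶠ y in nhdsWithin a (Set.Ioi a), slope f a y < 0 := hev.filter_mono hle
  have hmem : Set.Ioo a 1 ∈ nhdsWithin a (Set.Ioi a) :=
    Ioo_mem_nhdsGT_of_mem ⟨le_refl a, ha.2⟩
  have hev3 : ∀ᶠ y in nhdsWithin a (Set.Ioi a), slope f a y < 0 ∧ y ∈ Set.Ioo a 1 :=
    hev2.and (eventually_of_mem hmem (fun y hy => hy))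
  obtain ⟨y, hy1, hy2⟩ := hev3.exists
  rw [slope_def_field] at hy1
  have hya : a < y := hy2.1
  have hfy : f y < f a := by
    have hden : (0:ℝ) < y - a := by linarith
    have := (div_neg_iff.1 hy1)
    rcases this with ⟨_, h⟩ | ⟨h, _⟩
    · linarith
    · linarith
  exact absurd (hmin y ⟨le_trans ha.1 (le_of_lt hya), hy2.2⟩) (not_le.2 hfy)

/-- First-order conditions at a best response. -/
lemma foc_bestRespA (lam lam' c c' : ℝ → ℝ) (thA thB muG : ℝ)
    (hlamDeriv : ∀ α ∈ Set.Icc (0:ℝ) 1, HasDerivAt lam (lam' α) α)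
    (hcDeriv : ∀ α ∈ Set.Ico (0:ℝ) 1, HasDerivAt c (c' α) α)
    {a b : ℝ} (hbr : IsBestRespA lam c thA thB muG a b) :
    0 ≤ c' a - lam' a * (thA - muG) * (thA - teamDec lam thA thB muG a b) ∧
    (0 < a → c' a - lam' a * (thA - muG) * (thA - teamDec lam thA thB muG a b) = 0) := by
  obtain ⟨ha, hmin⟩ := hbr
  have hd := hasDerivAt_lossA lam lam' c c' thA thB muG hlamDeriv hcDeriv ha b
  constructor
  · by_contra hneg
    push_neg at hneg
    exact not_isMin_of_deriv_neg hd ha hneg hmin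
  · intro hpos
    have hmem : Set.Ico (0:ℝ) 1 ∈ nhds a :=
      mem_of_superset (Ioo_mem_nhds hpos ha.2) Set.Ioo_subset_Ico_self
    have hlm : IsLocalMin (fun α => lossA lam c thA thB muG α b) a :=
      (isMinOn_iff.mpr hmin).isLocalMin hmem
    exact hlm.hasDerivAt_eq_zero hd

/-- Competitive versus free-riding best responses. If preferences conflict
(`d_A·d_B < 0`), Alice's best-response map is nondecreasing in `α_B`, strictly where positive;
if they are aligned (`d_A·d_B > 0`), it is nonincreasing, strictly where positive. -/
theorem bestRespA_monotonicity
    (lam lam' c c' : ℝ → ℝ)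
    (hlamDeriv : ∀ α ∈ Set.Icc (0:ℝ) 1, HasDerivAt lam (lam' α) α)
    (hlam'Cont : ContinuousOn lam' (Set.Icc (0:ℝ) 1))
    (hlam0 : lam 0 = 0) (hlam1 : lam 1 = 1)
    (hlam'pos : ∀ α ∈ Set.Icc (0:ℝ) 1, 0 < lam' α)
    (hlam'anti : ∀ x ∈ Set.Icc (0:ℝ) 1, ∀ y ∈ Set.Icc (0:ℝ) 1, x ≤ y → lam' y ≤ lam' x)
    (hcDeriv : ∀ α ∈ Set.Ico (0:ℝ) 1, HasDerivAt c (c' α) α)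
    (hc'Cont : ContinuousOn c' (Set.Ico (0:ℝ) 1))
    (hc0 : c 0 = 0)
    (hc'nonneg : ∀ α ∈ Set.Ico (0:ℝ) 1, 0 ≤ c' α)
    (hc'strictMono : ∀ x ∈ Set.Ico (0:ℝ) 1, ∀ y ∈ Set.Ico (0:ℝ) 1, x < y → c' x < c' y)
    (hc'top : Filter.Tendsto c' (nhdsWithin 1 (Set.Iio 1)) Filter.atTop)
    (thA thB muG dA dB : ℝ)
    (hdA : dA = thA - muG) (hdB : dB = thB - muG)
    (hdAne : dA ≠ 0) (hdBne : dB ≠ 0) :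
    (dA * dB < 0 →
      ∀ aB1 ∈ Set.Ico (0:ℝ) 1, ∀ aB2 ∈ Set.Ico (0:ℝ) 1, ∀ a1 a2 : ℝ,
        IsBestRespA lam c thA thB muG a1 aB1 → IsBestRespA lam c thA thB muG a2 aB2 →
        (aB1 ≤ aB2 → a1 ≤ a2) ∧ (aB1 < aB2 → 0 < a1 → a1 < a2)) ∧
    (dA * dB > 0 →
      ∀ aB1 ∈ Set.Ico (0:ℝ) 1, ∀ aB2 ∈ Set.Ico (0:ℝ) 1, ∀ a1 a2 : ℝ,
        IsBestRespA lam c thA thB muG a1 aB1 → IsBestRespA lam c thA thB muG a2 aB2 →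
        (aB1 ≤ aB2 → a2 ≤ a1) ∧ (aB1 < aB2 → 0 < a2 → a2 < a1)) := by
  -- λ is strictly monotone on [0,1]
  have hlamMono : StrictMonoOn lam (Set.Icc (0:ℝ) 1) := by
    apply strictMonoOn_of_deriv_pos (convex_Icc (0:ℝ) 1)
    · exact fun x hx => (hlamDeriv x hx).continuousAt.continuousWithinAt
    · intro x hx
      rw [interior_Icc] at hx
      rw [(hlamDeriv x (Set.Ioo_subset_Icc_self hx)).deriv]
      exact hlam'pos x (Set.Ioo_subset_Icc_self hx)
  -- the marginal benefit/cost functions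
  set F : ℝ → ℝ := fun α => 2 * c' α / lam' α + lam α * dA ^ 2 with hF
  set R : ℝ → ℝ := fun b => 2 * dA ^ 2 - lam b * (dA * dB) with hR
  -- F is strictly monotone on [0,1)
  have hFmono : ∀ x ∈ Set.Ico (0:ℝ) 1, ∀ y ∈ Set.Ico (0:ℝ) 1, x < y → F x < F y := by
    intro x hx y hy hxy
    have hx' : x ∈ Set.Icc (0:ℝ) 1 := Set.Ico_subset_Icc_self hx
    have hy' : y ∈ Set.Icc (0:ℝ) 1 := Set.Ico_subset_Icc_self hy
    have hlx : 0 < lam' x := hlam'pos x hx'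
    have hly : 0 < lam' y := hlam'pos y hy'
    have hanti : lam' y ≤ lam' x := hlam'anti x hx' y hy' (le_of_lt hxy)
    have hcx : 0 ≤ c' x := hc'nonneg x hx
    have hcxy : c' x < c' y := hc'strictMono x hx y hy hxy
    have h1 : 2 * c' x / lam' x ≤ 2 * c' x / lam' y :=
      div_le_div_of_nonneg_left (by linarith) hly hanti
    have h2 : 2 * c' x / lam' y < 2 * c' y / lam' y :=
      (div_lt_div_iff_of_pos_right hly).mpr (by linarith)
    have h3 : lam x * dA ^ 2 ≤ lam y * dA ^ 2 :=
      mul_le_mul_of_nonneg_right (le_of_lt (hlamMono hx' hy' hxy)) (sq_nonneg dA)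
    simp only [hF]
    linarith
  -- key first-order characterization
  have hkey : ∀ a b : ℝ, IsBestRespA lam c thA thB muG a b →
      R b ≤ F a ∧ (0 < a → F a = R b) := by
    intro a b hbr
    have ha : a ∈ Set.Ico (0:ℝ) 1 := hbr.1
    have hla : 0 < lam' a := hlam'pos a (Set.Ico_subset_Icc_self ha)
    have hfoc := foc_bestRespA lam lam' c c' thA thB muG hlamDeriv hcDeriv hbr
    have hident : c' a - lam' a * (thA - muG) * (thA - teamDec lam thA thB muG a b)
        = lam' a / 2 * (F a - R b) := by
      simp only [hF, hR, teamDec, hdA, hdB]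
      field_simp
      ring
    constructor
    · have h0 := hfoc.1
      rw [hident] at h0
      by_contra hc2
      push_neg at hc2
      have : lam' a / 2 * (F a - R b) < 0 :=
        mul_neg_of_pos_of_neg (by linarith) (by linarith)
      linarith
    · intro hpos
      have h0 := hfoc.2 hpos
      rw [hident] at h0
      have : F a - R b = 0 := by
        rcases mul_eq_zero.1 h0 with h | h
        · exfalso; rw [div_eq_zero_iff] at h
          rcases h with h | h
          · exact absurd h (ne_of_gt hla)
          · norm_num at h
        · exact h
      linarith
  constructor
  · -- conflicting preferences: dA * dB < 0
    intro hconf aB1 hb1 aB2 hb2 a1 a2 hbr1 hbr2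
    have ha1 := hbr1.1
    have ha2 := hbr2.1
    have hRmono : lam aB1 ≤ lam aB2 → R aB1 ≤ R aB2 := by
      intro h
      simp only [hR]
      nlinarith
    constructor
    · intro hb12
      by_contra hcon
      push_neg at hcon
      have h01 : 0 < a1 := lt_of_le_of_lt ha2.1 hcon
      have hFa1 : F a1 = R aB1 := (hkey a1 aB1 hbr1).2 h01
      have hR12 : R aB1 ≤ R aB2 := by
        apply hRmono
        rcases eq_or_lt_of_le hb12 with h | h
        · rw [h]
        · exact le_of_lt (hlamMono (Set.Ico_subset_Icc_self hb1) (Set.Ico_subset_Icc_self hb2) h)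
      have hRF2 : R aB2 ≤ F a2 := (hkey a2 aB2 hbr2).1
      have := hFmono a2 ha2 a1 ha1 hcon
      linarith
    · intro hb12 h01
      have hFa1 : F a1 = R aB1 := (hkey a1 aB1 hbr1).2 h01
      have hR12 : R aB1 < R aB2 := by
        have hl : lam aB1 < lam aB2 :=
          hlamMono (Set.Ico_subset_Icc_self hb1) (Set.Ico_subset_Icc_self hb2) hb12
        simp only [hR]
        nlinarith
      have hRF2 : R aB2 ≤ F a2 := (hkey a2 aB2 hbr2).1
      by_contra hcon
      push_neg at hcon
      rcases eq_or_lt_of_le hcon with h | h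
      · rw [← h] at hFa1; linarith
      · have := hFmono a2 ha2 a1 ha1 h
        linarith
  · -- aligned preferences: dA * dB > 0
    intro halign aB1 hb1 aB2 hb2 a1 a2 hbr1 hbr2
    have ha1 := hbr1.1
    have ha2 := hbr2.1
    constructor
    · intro hb12
      by_contra hcon
      push_neg at hcon
      have h02 : 0 < a2 := lt_of_le_of_lt ha1.1 hcon
      have hFa2 : F a2 = R aB2 := (hkey a2 aB2 hbr2).2 h02
      have hR21 : R aB2 ≤ R aB1 := by
        have hl : lam aB1 ≤ lam aB2 := by
          rcases eq_or_lt_of_le hb12 with h | h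
          · rw [h]
          · exact le_of_lt (hlamMono (Set.Ico_subset_Icc_self hb1)
              (Set.Ico_subset_Icc_self hb2) h)
        simp only [hR]
        nlinarith
      have hRF1 : R aB1 ≤ F a1 := (hkey a1 aB1 hbr1).1
      have := hFmono a1 ha1 a2 ha2 hcon
      linarith
    · intro hb12 h02
      have hFa2 : F a2 = R aB2 := (hkey a2 aB2 hbr2).2 h02
      have hR21 : R aB2 < R aB1 := by
        have hl : lam aB1 < lam aB2 :=
          hlamMono (Set.Ico_subset_Icc_self hb1) (Set.Ico_subset_Icc_self hb2) hb12
        simp only [hR]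
        nlinarith
      have hRF1 : R aB1 ≤ F a1 := (hkey a1 aB1 hbr1).1
      by_contra hcon
      push_neg at hcon
      rcases eq_or_lt_of_le hcon with h | h
      · rw [← h] at hFa2; linarith
      · have := hFmono a1 ha1 a2 ha2 h
        linarith
end
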